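/- Let D be an oriented alternating knot diagram whose crossing number n is a nonzero even number, modeled by a Gauss code g. Then X_D(t) ≠ X_{−D}(t), where −D is D with the orientation reversed. -/

import Mathlib

open Polynomial Finset

/-- An oriented knot diagram with `n` crossings, modeled by its oriented Gauss code. -/
structure GaussCode (n : ℕ) where
  g : ZMod (2 * n) → Fin n × Bool
  o : Fin n → ZMod (2 * n)
  u : Fin n → ZMod (2 * n)
  over_iff : ∀ (c : Fin n) (e : ZMod (2 * n)), g e = (c, true) ↔ e = o c
  under_iff : ∀ (c : Fin n) (e : ZMod (2 * n)), g e = (c, false) ↔ e = u c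

namespace GaussCode

variable {n : ℕ}

/-- The warping degree of the base position `e`: the number of crossings whose
under-passage occurs strictly before its over-passage when traversing the diagram
starting at `e`. -/
def d (D : GaussCode n) (e : ZMod (2 * n)) : ℕ :=
  (Finset.univ.filter fun c : Fin n => (D.u c - e).val < (D.o c - e).val).card

/-- The warping crossing polynomial. -/
noncomputable def Xpoly (D : GaussCode n) : Polynomial ℤ :=
  ∑ c : Fin n, Polynomial.X ^ D.d (D.o c)

/-- The warping polynomial. -/
noncomputable def Wpoly (D : GaussCode n) : Polynomial ℤ :=
  ∑ k ∈ Finset.range (2 * n), Polynomial.X ^ D.d (k : ZMod (2 * n))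

/-- The warping degree of the diagram: minimum over all base positions. -/
noncomputable def wdeg (D : GaussCode n) : ℕ :=
  sInf (Set.range fun e : ZMod (2 * n) => D.d e)

/-- The diagram is alternating. -/
def Alternating (D : GaussCode n) : Prop :=
  ∀ e : ZMod (2 * n), (D.g e).2 ≠ (D.g (e + 1)).2

end GaussCode

/-!
Moving the base point past an over-passage raises the warping degree by one, and moving it past
an under-passage lowers it by one. In an alternating diagram the passages alternate, so the
warping degree is `2`-periodic and takes one value `a` at every over-passage: `X_D = n t^a`.
Reversing the orientation swaps, for the base point at `o c`, the warping and non-warping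
crossings among those other than `c`, so `X_{-D} = n t^(n - 1 - a)`, and `a ≠ n - 1 - a`
because `n - 1` is odd.
-/

namespace ZMod

variable {m : ℕ} [NeZero m]

lemma val_neg_one_eq_sub_one : (-1 : ZMod m).val = m - 1 := by
  obtain ⟨k, rfl⟩ := Nat.exists_eq_succ_of_ne_zero (NeZero.ne m)
  exact val_neg_one k

lemma val_lt_val_neg_one {x : ZMod m} (hx : x ≠ -1) : x.val < (-1 : ZMod m).val := by
  have hne : x.val ≠ (-1 : ZMod m).val := fun h => hx (val_injective m h)
  have := x.val_lt
  rw [val_neg_one_eq_sub_one] at hne ⊢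
  omega

lemma val_sub_one_lt_val_sub_one_iff {x y : ZMod m} (hx : x ≠ 0) (hy : y ≠ 0) :
    (x - 1).val < (y - 1).val ↔ x.val < y.val := by
  have hx' : 1 ≤ x.val := Nat.one_le_iff_ne_zero.mpr ((val_ne_zero x).mpr hx)
  have hy' : 1 ≤ y.val := Nat.one_le_iff_ne_zero.mpr ((val_ne_zero y).mpr hy)
  have h1 : (1 : ZMod m).val ≤ 1 := by rw [val_one_eq_one_mod]; exact Nat.mod_le 1 m
  rw [val_sub (h1.trans hx'), val_sub (h1.trans hy')]
  omega

lemma val_neg_lt_val_neg_iff {x y : ZMod m} (hx : x ≠ 0) (hy : y ≠ 0) :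
    (-x).val < (-y).val ↔ y.val < x.val := by
  rw [neg_val, neg_val, if_neg hx, if_neg hy]
  have := x.val_lt
  have := y.val_lt
  omega

end ZMod

lemma Function.Periodic.apply_add_natCast_mod {R α : Type*} [Semiring R] {f : R → α} {p : ℕ}
    (hf : Function.Periodic f p) (x : R) (k : ℕ) : f (x + k) = f (x + (k % p : ℕ)) := by
  conv_lhs => rw [← Nat.mod_add_div k p, mul_comm]
  push_cast
  rw [← add_assoc]
  exact hf.nat_mul (k / p) _

namespace GaussCode

variable {n : ℕ} (D : GaussCode n)

lemma neZero (D : GaussCode n) : NeZero n :=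
  ⟨fun hn => by subst hn; exact (D.g 0).1.elim0⟩

@[simp]
lemma g_o (c : Fin n) : D.g (D.o c) = (c, true) :=
  (D.over_iff c _).mpr rfl

@[simp]
lemma g_u (c : Fin n) : D.g (D.u c) = (c, false) :=
  (D.under_iff c _).mpr rfl

lemma o_ne_u (c : Fin n) : D.o c ≠ D.u c := fun h => by
  simpa using congrArg (fun e => (D.g e).2) h

lemma o_ne_of_g_eq {e : ZMod (2 * n)} {c c' : Fin n} {b : Bool} (he : D.g e = (c, b))
    (hc' : c' ≠ c) : D.o c' ≠ e :=
  fun h => hc' (by simp only [← h, g_o, Prod.mk.injEq] at he; exact he.1)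

lemma u_ne_of_g_eq {e : ZMod (2 * n)} {c c' : Fin n} {b : Bool} (he : D.g e = (c, b))
    (hc' : c' ≠ c) : D.u c' ≠ e :=
  fun h => hc' (by simp only [← h, g_u, Prod.mk.injEq] at he; exact he.1)

-- `(x - e).val` is the distance travelled from the base point `e` to the position `x`.
def IsWarpingCrossing (e : ZMod (2 * n)) (c : Fin n) : Prop :=
  (D.u c - e).val < (D.o c - e).val

instance (e : ZMod (2 * n)) : DecidablePred (D.IsWarpingCrossing e) :=
  fun _ => Nat.decLt _ _

lemma d_eq_add_sum_erase (e : ZMod (2 * n)) (c : Fin n) :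
    D.d e = (if D.IsWarpingCrossing e c then 1 else 0) +
      ∑ c' ∈ univ.erase c, if D.IsWarpingCrossing e c' then 1 else 0 := by
  rw [add_sum_erase univ (fun c' => if D.IsWarpingCrossing e c' then 1 else 0) (mem_univ c)]
  exact card_filter (D.IsWarpingCrossing e) univ

lemma not_isWarpingCrossing_o (c : Fin n) : ¬ D.IsWarpingCrossing (D.o c) c := by
  simp [IsWarpingCrossing]

lemma isWarpingCrossing_u (c : Fin n) : D.IsWarpingCrossing (D.u c) c := by
  have := D.neZero
  simpa [IsWarpingCrossing, Nat.pos_iff_ne_zero, sub_eq_zero] using D.o_ne_u c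

lemma isWarpingCrossing_o_add_one (c : Fin n) : D.IsWarpingCrossing (D.o c + 1) c := by
  have := D.neZero
  have hsub : D.u c - (D.o c + 1) ≠ -1 := fun h => D.o_ne_u c (by linear_combination -h)
  simpa [IsWarpingCrossing] using ZMod.val_lt_val_neg_one hsub

lemma not_isWarpingCrossing_u_add_one (c : Fin n) : ¬ D.IsWarpingCrossing (D.u c + 1) c := by
  have := D.neZero
  have := (D.o c - (D.u c + 1)).val_lt
  simp only [IsWarpingCrossing, sub_add_cancel_left, ZMod.val_neg_one_eq_sub_one, not_lt]
  omega

lemma isWarpingCrossing_add_one_iff {e : ZMod (2 * n)} {c c' : Fin n} {b : Bool}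
    (he : D.g e = (c, b)) (hc' : c' ≠ c) :
    D.IsWarpingCrossing (e + 1) c' ↔ D.IsWarpingCrossing e c' := by
  have := D.neZero
  simp only [IsWarpingCrossing, ← sub_sub]
  exact ZMod.val_sub_one_lt_val_sub_one_iff (sub_ne_zero.mpr (D.u_ne_of_g_eq he hc'))
    (sub_ne_zero.mpr (D.o_ne_of_g_eq he hc'))

lemma d_add_one (e : ZMod (2 * n)) :
    D.d (e + 1) + (!(D.g e).2).toNat = D.d e + (D.g e).2.toNat := by
  generalize he : D.g e = p
  obtain ⟨c, b⟩ := p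
  have hrest : ∑ c' ∈ univ.erase c, (if D.IsWarpingCrossing (e + 1) c' then 1 else 0) =
      ∑ c' ∈ univ.erase c, if D.IsWarpingCrossing e c' then 1 else 0 :=
    sum_congr rfl fun c' hc' =>
      if_congr (D.isWarpingCrossing_add_one_iff he (ne_of_mem_erase hc')) rfl rfl
  rw [D.d_eq_add_sum_erase (e + 1) c, D.d_eq_add_sum_erase e c, hrest]
  cases b
  · obtain rfl := (D.under_iff c e).mp he
    rw [if_pos (D.isWarpingCrossing_u c), if_neg (D.not_isWarpingCrossing_u_add_one c)]
    simp only [Bool.not_false, Bool.toNat_true, Bool.toNat_false]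
    omega
  · obtain rfl := (D.over_iff c e).mp he
    rw [if_neg (D.not_isWarpingCrossing_o c), if_pos (D.isWarpingCrossing_o_add_one c)]
    simp only [Bool.not_true, Bool.toNat_true, Bool.toNat_false]
    omega

variable {D}

lemma Alternating.snd_add_one (halt : D.Alternating) (e : ZMod (2 * n)) :
    (D.g (e + 1)).2 = !(D.g e).2 :=
  Bool.eq_not.mpr (halt e).symm

lemma Alternating.snd_periodic (halt : D.Alternating) :
    Function.Periodic (fun e => (D.g e).2) 2 := fun e => by
  show (D.g (e + 2)).2 = (D.g e).2
  rw [show e + 2 = e + 1 + 1 by ring, halt.snd_add_one, halt.snd_add_one, Bool.not_not]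

lemma Alternating.d_periodic (halt : D.Alternating) : Function.Periodic D.d 2 := fun e => by
  have h0 := D.d_add_one e
  have h1 := D.d_add_one (e + 1)
  rw [halt.snd_add_one, Bool.not_not, add_assoc, one_add_one_eq_two] at h1
  generalize (D.g e).2 = b at h0 h1
  cases b <;>
    simp only [Bool.not_true, Bool.not_false, Bool.toNat_true, Bool.toNat_false] at h0 h1 <;>
    omega

lemma Alternating.d_eq_of_snd_eq (halt : D.Alternating) {e e' : ZMod (2 * n)}
    (h : (D.g e).2 = (D.g e').2) : D.d e = D.d e' := by
  have := D.neZero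
  obtain ⟨k, rfl⟩ : ∃ k : ℕ, e' = e + k := ⟨(e' - e).val, by simp⟩
  have hsnd := halt.snd_periodic.apply_add_natCast_mod e k
  rw [halt.d_periodic.apply_add_natCast_mod e k]
  rcases Nat.mod_two_eq_zero_or_one k with hk | hk
  · simp [hk]
  · simp only [hk, Nat.cast_one] at hsnd
    exact absurd (h.trans hsnd) (halt e)

lemma Alternating.d_o_eq (halt : D.Alternating) (c c' : Fin n) : D.d (D.o c) = D.d (D.o c') :=
  halt.d_eq_of_snd_eq (by simp)

lemma Alternating.Xpoly_eq_monomial (halt : D.Alternating) (c : Fin n) :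
    D.Xpoly = monomial (D.d (D.o c)) (n : ℤ) := by
  simp [Xpoly, halt.d_o_eq _ c, ← C_mul_X_pow_eq_monomial]

variable {Dm : GaussCode n}

lemma o_eq_neg_of_reverse (h : ∀ e, Dm.g e = D.g (-e)) (c : Fin n) : Dm.o c = -D.o c :=
  ((Dm.over_iff c _).mp (by rw [h, neg_neg, g_o])).symm

lemma u_eq_neg_of_reverse (h : ∀ e, Dm.g e = D.g (-e)) (c : Fin n) : Dm.u c = -D.u c :=
  ((Dm.under_iff c _).mp (by rw [h, neg_neg, g_u])).symm

lemma Alternating.reverse (halt : D.Alternating) (h : ∀ e, Dm.g e = D.g (-e)) :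
    Dm.Alternating := fun e => by
  have hne := halt (-(e + 1))
  rw [show -(e + 1) + 1 = -e by ring] at hne
  rw [h, h]
  exact hne.symm

lemma isWarpingCrossing_o_reverse_iff (h : ∀ e, Dm.g e = D.g (-e)) {c c' : Fin n}
    (hc' : c' ≠ c) : Dm.IsWarpingCrossing (Dm.o c) c' ↔ ¬ D.IsWarpingCrossing (D.o c) c' := by
  have := D.neZero
  have hu : D.u c' - D.o c ≠ 0 := sub_ne_zero.mpr (D.u_ne_of_g_eq (D.g_o c) hc')
  have ho : D.o c' - D.o c ≠ 0 := sub_ne_zero.mpr (D.o_ne_of_g_eq (D.g_o c) hc')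
  have huo : (D.u c' - D.o c).val ≠ (D.o c' - D.o c).val :=
    fun hval => D.o_ne_u c' (by simpa using (ZMod.val_injective _ hval).symm)
  simp only [IsWarpingCrossing, o_eq_neg_of_reverse h, u_eq_neg_of_reverse h, neg_sub_neg]
  rw [← neg_sub (D.u c'), ← neg_sub (D.o c'), ZMod.val_neg_lt_val_neg_iff hu ho]
  omega

lemma d_o_add_d_o_reverse (h : ∀ e, Dm.g e = D.g (-e)) (c : Fin n) :
    D.d (D.o c) + Dm.d (Dm.o c) + 1 = n := by
  have hone : ∀ c' ∈ univ.erase c, ((if D.IsWarpingCrossing (D.o c) c' then 1 else 0) +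
      if Dm.IsWarpingCrossing (Dm.o c) c' then 1 else 0) = 1 := fun c' hc' => by
    rw [if_congr (isWarpingCrossing_o_reverse_iff h (ne_of_mem_erase hc')) rfl rfl]
    split_ifs <;> rfl
  rw [D.d_eq_add_sum_erase _ c, Dm.d_eq_add_sum_erase _ c, if_neg (D.not_isWarpingCrossing_o c),
    if_neg (Dm.not_isWarpingCrossing_o c), zero_add, zero_add, ← sum_add_distrib,
    sum_congr rfl hone, sum_const, card_erase_of_mem (mem_univ c), card_univ, Fintype.card_fin,
    smul_eq_mul, mul_one]
  exact Nat.sub_add_cancel (D.neZero.pos)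

end GaussCode

theorem Xpoly_ne_Xpoly_reverse_of_alternating_even_general
    (n : ℕ) (heven : Even n) (D Dm : GaussCode n)
    (halt : D.Alternating)
    (h : ∀ e : ZMod (2 * n), Dm.g e = D.g (-e)) :
    D.Xpoly ≠ Dm.Xpoly := by
  have hn := D.neZero
  let c : Fin n := ⟨0, hn.pos⟩
  rw [halt.Xpoly_eq_monomial c, (halt.reverse h).Xpoly_eq_monomial c, Ne,
    monomial_left_inj (Nat.cast_ne_zero.mpr hn.ne)]
  have hsum := D.d_o_add_d_o_reverse h c
  obtain ⟨k, rfl⟩ := heven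
  omega

/-- An alternating knot diagram with a nonzero even number of crossings has
`X_D(t) ≠ X_{−D}(t)`. -/
theorem Xpoly_ne_Xpoly_reverse_of_alternating_even
    (n : ℕ) (hn : n ≠ 0) (heven : Even n) (D Dm : GaussCode n)
    (halt : D.Alternating)
    (h : ∀ e : ZMod (2 * n), Dm.g e = D.g (-e)) :
    D.Xpoly ≠ Dm.Xpoly :=
  Xpoly_ne_Xpoly_reverse_of_alternating_even_general n heven D Dm halt h
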